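/- arXiv:1304.3543 — 8 statements merged into one kernel-verified Lean document; each statement's English description precedes it below -/
import Mathlib

section
/- Let a ∈ (0,1), set x = e^{2πia}, and let m be a positive integer. Then Z(−m, x) + (−1)^m · Z(−m, x^{−1}) = 0, where x^{−1} = e^{2πi(1−a)}. In particular, for even m, Z(−m, x) = −Z(−m, x^{−1}). -/
open Complex HurwitzZeta

/-!
Write `expZeta a = cosZeta a + I * sinZeta a`, where `cosZeta` is even and `sinZeta` odd in `a`.
At `s = -m` one of the two vanishes (a trivial zero coming from a pole of the Gamma factor):
`cosZeta` at the negative even integers, `sinZeta` at the negative odd ones. Hence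
`expZeta (-a) (-m) = (-1) ^ (m + 1) * expZeta a (-m)`.
-/

namespace HurwitzZeta

lemma cosZeta_neg_nat_of_even (a : UnitAddCircle) {m : ℕ} (hm : m ≠ 0) (he : Even m) :
    cosZeta a (-m) = 0 := by
  obtain ⟨n, rfl⟩ : ∃ n, m = 2 * (n + 1) := ⟨m / 2 - 1, by grind⟩
  convert cosZeta_neg_two_mul_nat_add_one a n using 2
  push_cast
  ring

lemma sinZeta_neg_nat_of_odd (a : UnitAddCircle) {m : ℕ} (ho : Odd m) :
    sinZeta a (-m) = 0 := by
  obtain ⟨n, rfl⟩ := ho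
  convert sinZeta_neg_two_mul_nat_sub_one a n using 2
  push_cast
  ring

lemma expZeta_neg (a : UnitAddCircle) (s : ℂ) :
    expZeta (-a) s = cosZeta a s - I * sinZeta a s := by
  rw [expZeta, cosZeta_neg, sinZeta_neg, mul_neg, sub_eq_add_neg]

lemma expZeta_neg_neg_nat (a : UnitAddCircle) {m : ℕ} (hm : m ≠ 0) :
    expZeta (-a) (-m) = (-1) ^ (m + 1) * expZeta a (-m) := by
  rw [expZeta_neg, expZeta]
  rcases Nat.even_or_odd m with he | ho
  · rw [cosZeta_neg_nat_of_even a hm he, (he.add_one).neg_one_pow]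
    ring
  · rw [sinZeta_neg_nat_of_odd a ho, (ho.add_one).neg_one_pow]
    ring

lemma expZeta_add_neg_one_pow_mul_expZeta_neg (a : UnitAddCircle) {m : ℕ} (hm : m ≠ 0) :
    expZeta a (-m) + (-1) ^ m * expZeta (-a) (-m) = 0 := by
  rw [expZeta_neg_neg_nat a hm, ← mul_assoc, ← pow_add,
    Odd.neg_one_pow ⟨m, by ring⟩]
  ring

end HurwitzZeta

lemma UnitAddCircle.coe_one_sub (a : ℝ) : ((1 - a : ℝ) : UnitAddCircle) = -(a : UnitAddCircle) := by
  rw [AddCircle.coe_sub, AddCircle.coe_period, zero_sub]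

theorem polylog_neg_functional_general (a : ℝ) (m : ℕ) (hm : 0 < m) :
    expZeta (a : UnitAddCircle) (-(m : ℂ))
        + (-1) ^ m * expZeta ((1 - a : ℝ) : UnitAddCircle) (-(m : ℂ)) = 0 ∧
    (Even m →
      expZeta (a : UnitAddCircle) (-(m : ℂ))
        = -expZeta ((1 - a : ℝ) : UnitAddCircle) (-(m : ℂ))) := by
  have key := expZeta_add_neg_one_pow_mul_expZeta_neg (a : UnitAddCircle) hm.ne'
  rw [← UnitAddCircle.coe_one_sub] at key
  refine ⟨key, fun he => ?_⟩
  rw [he.neg_one_pow, one_mul] at key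
  exact eq_neg_of_add_eq_zero_left key

/-- `Z(-m, x) + (-1)^m Z(-m, x⁻¹) = 0` for `x = e^{2πia}`, `a ∈ (0,1)`, and `m` a positive
integer; in particular `Z(-m, x) = -Z(-m, x⁻¹)` for even `m`. -/
theorem polylog_neg_functional (a : ℝ) (ha : a ∈ Set.Ioo (0 : ℝ) 1) (m : ℕ) (hm : 0 < m) :
    expZeta (a : UnitAddCircle) (-(m : ℂ))
        + (-1) ^ m * expZeta ((1 - a : ℝ) : UnitAddCircle) (-(m : ℂ)) = 0 ∧
    (Even m →
      expZeta (a : UnitAddCircle) (-(m : ℂ))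
        = -expZeta ((1 - a : ℝ) : UnitAddCircle) (-(m : ℂ))) :=
  polylog_neg_functional_general a m hm
end

section
/- Let 0 < θ < π and let m be a positive even integer. Then (Z(1−m, e^{iθ}) − Z(1−m, e^{−iθ}))/(2i·sin θ) = 0. (This says that the Witten L-function ζ^W_{SU(2)}(s, g), for a regular element g of SU(2) with eigenvalues e^{±iθ}, vanishes at s = −m for every positive even integer m.) -/
/-! The numerator is `2i · sinZeta(θ/2π, 1 - m)`, and `sinZeta a s` is the completed odd
zeta function divided by `Γ_ℝ(s + 1)`, whose poles at `s = -1, -3, -5, …` force trivial zeros at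
the negative odd integers `1 - m`. -/

open Complex HurwitzZeta

lemma HurwitzZeta.sinZeta_one_sub_of_even (a : UnitAddCircle) {m : ℕ} (hm : 0 < m)
    (hme : Even m) : sinZeta a (1 - m) = 0 := by
  obtain ⟨k, rfl⟩ : ∃ k, m = 2 * k + 2 := by
    obtain ⟨n, rfl⟩ := hme
    exact ⟨n - 1, by omega⟩
  convert sinZeta_neg_two_mul_nat_sub_one a k using 2
  push_cast
  ring

lemma HurwitzZeta.expZeta_sub_expZeta_neg_of_even (a : UnitAddCircle) {m : ℕ} (hm : 0 < m)
    (hme : Even m) : expZeta a (1 - m) - expZeta (-a) (1 - m) = 0 := by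
  have h := sinZeta_eq a (1 - m)
  rw [sinZeta_one_sub_of_even a hm hme, eq_comm, div_eq_zero_iff] at h
  exact h.resolve_right (by simp)

theorem witten_SU2_L_vanishing_general (θ : ℝ)
    (m : ℕ) (hm : 0 < m) (hme : Even m) :
    (expZeta ((θ / (2 * Real.pi) : ℝ) : UnitAddCircle) (1 - (m : ℂ))
        - expZeta ((1 - θ / (2 * Real.pi) : ℝ) : UnitAddCircle) (1 - (m : ℂ)))
      / (2 * I * (Real.sin θ : ℂ)) = 0 := by
  have hneg : ((1 - θ / (2 * Real.pi) : ℝ) : UnitAddCircle)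
      = -((θ / (2 * Real.pi) : ℝ) : UnitAddCircle) := by simp
  rw [hneg, expZeta_sub_expZeta_neg_of_even _ hm hme, zero_div]

/-- The Witten L-function of `SU(2)` at a regular element with eigenvalues `e^{±iθ}`
vanishes at `s = -m` for every positive even integer `m`. -/
theorem witten_SU2_L_vanishing (θ : ℝ) (hθ0 : 0 < θ) (hθπ : θ < Real.pi)
    (m : ℕ) (hm : 0 < m) (hme : Even m) :
    (expZeta ((θ / (2 * Real.pi) : ℝ) : UnitAddCircle) (1 - (m : ℂ))
        - expZeta ((1 - θ / (2 * Real.pi) : ℝ) : UnitAddCircle) (1 - (m : ℂ)))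
      / (2 * I * (Real.sin θ : ℂ)) = 0 :=
  witten_SU2_L_vanishing_general θ m hm hme
end

section
/- The derivative of the Riemann zeta function at s = −2 equals −ζ(3)/(4π²). (This is the first derivative at s = −2 of the Witten L-function ζ^W_{SU(2)}(s, g) for g the identity element, i.e. θ = 0.) -/
/-! Differentiate the functional equation `ζ(1 - s) = 2 (2π)^(-s) Γ(s) cos(πs/2) ζ(s)` at an odd
integer `s = 2m + 1 ≥ 3`. There `cos(πs/2)` vanishes, so only the term carrying its derivative
`-(π/2) sin(πs/2) = -(π/2)(-1)^m` survives, giving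
`ζ'(-2m) = (-1)^m (2m)! ζ(2m + 1) / (2 (2π)^(2m))`. -/

open Complex

open scoped Real

theorem DifferentiableAt.hasDerivAt_mul_of_eq_zero {𝕜 : Type*} [NontriviallyNormedField 𝕜]
    {f g : 𝕜 → 𝕜} {g' x : 𝕜} (hf : DifferentiableAt 𝕜 f x)
    (hg : HasDerivAt g g' x) (hgx : g x = 0) :
    HasDerivAt (fun y => f y * g y) (f x * g') x := by
  have h := hf.hasDerivAt.mul hg
  rw [hgx, mul_zero, zero_add] at h
  exact h

lemma sin_pi_mul_two_mul_nat_add_one_div_two (m : ℕ) :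
    sin (π * (2 * m + 1) / 2) = (-1) ^ m := by
  have h : (π * (2 * m + 1) / 2 : ℂ) = ((π / 2 + m * π : ℝ) : ℂ) := by push_cast; ring
  rw [h, ← ofReal_sin, Real.sin_add_nat_mul_pi, Real.sin_pi_div_two]
  push_cast; ring

lemma cos_pi_mul_two_mul_nat_add_one_div_two (m : ℕ) :
    cos (π * (2 * m + 1) / 2) = 0 := by
  have h : (π * (2 * m + 1) / 2 : ℂ) = ((π / 2 + m * π : ℝ) : ℂ) := by push_cast; ring
  rw [h, ← ofReal_cos, Real.cos_add_nat_mul_pi, Real.cos_pi_div_two]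
  simp

lemma hasDerivAt_cos_pi_mul_div_two (s : ℂ) :
    HasDerivAt (fun t : ℂ => cos (π * t / 2)) (-sin (π * s / 2) * (π / 2)) s := by
  have h : HasDerivAt (fun t : ℂ => π * t / 2) (π / 2) s := by
    simpa using ((hasDerivAt_id s).const_mul (π : ℂ)).div_const 2
  exact (hasDerivAt_cos _).comp s h

lemma riemannZeta_one_sub_eventuallyEq {s : ℂ} (hs : 1 < s.re) :
    (fun t => riemannZeta (1 - t)) =ᶠ[nhds s]
      fun t => 2 * (2 * π) ^ (-t) * Gamma t * riemannZeta t * cos (π * t / 2) := by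
  filter_upwards [(isOpen_lt continuous_const continuous_re).mem_nhds hs] with t ht
  have hneg : ∀ n : ℕ, t ≠ -n := fun n h => by
    simp only [h, neg_re, natCast_re] at ht
    linarith [n.cast_nonneg (α := ℝ)]
  rw [riemannZeta_one_sub hneg (fun h => by simp [h] at ht)]
  ring

lemma differentiableAt_Gamma_of_pos_re {s : ℂ} (hs : 0 < s.re) : DifferentiableAt ℂ Gamma s :=
  differentiableAt_Gamma s fun m h => by
    simp only [h, neg_re, natCast_re] at hs
    linarith [m.cast_nonneg (α := ℝ)]

lemma hasDerivAt_riemannZeta_one_sub {s : ℂ} (hs : s ≠ 0) :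
    HasDerivAt (fun t => riemannZeta (1 - t)) (-deriv riemannZeta (1 - s)) s := by
  have h := (differentiableAt_riemannZeta (s := 1 - s) (by simpa using hs)).hasDerivAt.comp s
    ((hasDerivAt_id s).const_sub 1)
  rwa [mul_neg_one] at h

theorem deriv_riemannZeta_one_sub_of_cos_eq_zero {s : ℂ} (hs : 1 < s.re)
    (hcos : cos (π * s / 2) = 0) :
    deriv riemannZeta (1 - s) =
      2 * (2 * π) ^ (-s) * Gamma s * riemannZeta s * (sin (π * s / 2) * (π / 2)) := by
  have hF : DifferentiableAt ℂ (fun t : ℂ => 2 * (2 * π) ^ (-t) * Gamma t * riemannZeta t) s :=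
    ((differentiable_neg.differentiableAt.const_cpow (by simp [Real.pi_ne_zero])).const_mul 2 |>.mul
      (differentiableAt_Gamma_of_pos_re (by linarith))).mul
      (differentiableAt_riemannZeta (fun h => by norm_num [h] at hs))
  have h := (hasDerivAt_riemannZeta_one_sub (fun h => by norm_num [h] at hs)).unique
    ((hF.hasDerivAt_mul_of_eq_zero (hasDerivAt_cos_pi_mul_div_two s) hcos).congr_of_eventuallyEq
      (riemannZeta_one_sub_eventuallyEq hs))
  linear_combination -h

theorem deriv_riemannZeta_neg_two_mul_nat {m : ℕ} (hm : m ≠ 0) :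
    deriv riemannZeta (-2 * m) =
      (-1) ^ m * (2 * m).factorial * riemannZeta (2 * m + 1) / (2 * (2 * π) ^ (2 * m)) := by
  have hre : 1 < (2 * m + 1 : ℂ).re := by
    simp only [add_re, mul_re, re_ofNat, natCast_re, im_ofNat, natCast_im, one_re]
    have : (1 : ℝ) ≤ m := by exact_mod_cast Nat.one_le_iff_ne_zero.mpr hm
    linarith
  have h := deriv_riemannZeta_one_sub_of_cos_eq_zero hre (cos_pi_mul_two_mul_nat_add_one_div_two m)
  have hGamma : Gamma (2 * m + 1) = (2 * m).factorial := by
    rw [← Gamma_nat_eq_factorial]; push_cast; rfl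
  have hpow : (2 * (π : ℂ)) ^ (-(2 * m + 1 : ℂ)) = (((2 : ℂ) * π) ^ (2 * m + 1))⁻¹ := by
    rw [cpow_neg, show (2 * m + 1 : ℂ) = ((2 * m + 1 : ℕ) : ℂ) by push_cast; ring, cpow_natCast]
  rw [show (1 : ℂ) - (2 * m + 1) = -2 * m by ring, hGamma, hpow,
    sin_pi_mul_two_mul_nat_add_one_div_two] at h
  rw [h]
  field_simp
  ring

/-- The derivative of the Riemann zeta function at `s = -2` equals `-ζ(3)/(4π²)`. -/
theorem deriv_riemannZeta_neg_two :
    deriv riemannZeta (-2) = -riemannZeta 3 / (4 * (Real.pi : ℂ) ^ 2) := by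
  have h := deriv_riemannZeta_neg_two_mul_nat one_ne_zero
  norm_num at h
  rw [h]
  field_simp
  ring
end

section
/- Let θ₁, θ₂ ∈ (0, π), set a = (θ₁+θ₂)/(2π) and b = (θ₁−θ₂)/(2π) (viewed in ℝ/ℤ), and let m be a positive even integer. Then Z(2−m, e^{2πia}) + Z(2−m, e^{−2πia}) − Z(2−m, e^{2πib}) − Z(2−m, e^{−2πib}) = 0, where for b ≡ 0 (mod 1) the value Z(s, 1) is interpreted as the Riemann zeta value ζ(s). (This says the two-variable Witten L-function ζ^W_{SU(2)}(s; g₁, g₂) of SU(2), for g₁, g₂ with eigenvalues e^{±iθ₁}, e^{±iθ₂}, vanishes at s = −m for every positive even integer m.) -/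
/-!
Pairing `x` with `-x` turns the numerator into `2 (cosZeta a (2 - m) - cosZeta b (2 - m))`.
For even `m > 0` the point `2 - m` is `0` or a negative even integer, where `cosZeta` takes
the value `-1/2` resp. `0` independently of the parameter (trivial zeros of the even
Hurwitz-type zeta function), so the difference vanishes for all `a, b`.
-/

open Complex HurwitzZeta

lemma expZeta_add_expZeta_neg (x : UnitAddCircle) (s : ℂ) :
    expZeta x s + expZeta (-x) s = 2 * cosZeta x s := by
  rw [cosZeta_eq]
  ring

lemma cosZeta_neg_two_mul_nat (x : UnitAddCircle) (n : ℕ) :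
    cosZeta x (-2 * n) = if n = 0 then -1 / 2 else 0 := by
  rcases n with _ | n
  · simpa using cosZeta_apply_zero x
  · simpa using cosZeta_neg_two_mul_nat_add_one x n

lemma cosZeta_two_sub_even_eq (x y : UnitAddCircle) {m : ℕ} (hm : 0 < m) (hme : Even m) :
    cosZeta x (2 - m) = cosZeta y (2 - m) := by
  obtain ⟨k, rfl⟩ := hme
  have hs : (2 : ℂ) - ↑(k + k) = -2 * ↑(k - 1) := by
    rw [Nat.cast_sub (by omega)]
    push_cast
    ring
  rw [hs, cosZeta_neg_two_mul_nat, cosZeta_neg_two_mul_nat]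

theorem witten_SU2_two_variable_vanishing_general
    (a b : ℝ)
    (m : ℕ) (hm : 0 < m) (hme : Even m) :
    expZeta (a : UnitAddCircle) (2 - (m : ℂ)) + expZeta ((-a : ℝ) : UnitAddCircle) (2 - (m : ℂ))
      - expZeta (b : UnitAddCircle) (2 - (m : ℂ))
      - expZeta ((-b : ℝ) : UnitAddCircle) (2 - (m : ℂ)) = 0 := by
  rw [AddCircle.coe_neg, AddCircle.coe_neg]
  have hpair_a := expZeta_add_expZeta_neg (a : UnitAddCircle) (2 - m)
  have hpair_b := expZeta_add_expZeta_neg (b : UnitAddCircle) (2 - m)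
  have hcos := cosZeta_two_sub_even_eq (a : UnitAddCircle) b hm hme
  linear_combination hpair_a - hpair_b + 2 * hcos

/-- The two-variable Witten L-function of `SU(2)` at regular elements with eigenvalues
`e^{±iθ₁}`, `e^{±iθ₂}` vanishes at `s = -m` for every positive even integer `m`:
with `a = (θ₁+θ₂)/(2π)` and `b = (θ₁-θ₂)/(2π)` in `ℝ/ℤ`, the numerator
`Z(2-m, e^{2πia}) + Z(2-m, e^{-2πia}) - Z(2-m, e^{2πib}) - Z(2-m, e^{-2πib})` is zero.
(Mathlib's `expZeta` at the class of an integer equals the Riemann zeta function, so the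
convention `Z(s, 1) = ζ(s)` is built in.) -/
theorem witten_SU2_two_variable_vanishing (θ₁ θ₂ : ℝ)
    (hθ₁ : θ₁ ∈ Set.Ioo 0 Real.pi) (hθ₂ : θ₂ ∈ Set.Ioo 0 Real.pi)
    (a b : ℝ) (ha : a = (θ₁ + θ₂) / (2 * Real.pi)) (hb : b = (θ₁ - θ₂) / (2 * Real.pi))
    (m : ℕ) (hm : 0 < m) (hme : Even m) :
    expZeta (a : UnitAddCircle) (2 - (m : ℂ)) + expZeta ((-a : ℝ) : UnitAddCircle) (2 - (m : ℂ))
      - expZeta (b : UnitAddCircle) (2 - (m : ℂ))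
      - expZeta ((-b : ℝ) : UnitAddCircle) (2 - (m : ℂ)) = 0 :=
  witten_SU2_two_variable_vanishing_general a b m hm hme
end

section
/- Let x = i = e^{iπ/2}, so that x³ = x^{−1} = e^{2πi·(3/4)} and x^{−3} = x = e^{2πi·(1/4)}. Then (Z(1, x³) − 3·Z(1, x) + 3·Z(1, x^{−1}) − Z(1, x^{−3}))/(x − x^{−1})³ = 4·(Z(1, e^{2πi·(3/4)}) − Z(1, e^{2πi·(1/4)}))/(2i)³ = π/4. In particular this value is nonzero. (This says that the three-variable Witten L-function ζ^W_{SU(2)}(−2; g, g, g) is nonzero for g ∈ SU(2) with eigenvalues ±i.) -/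
open Complex HurwitzZeta

/-!
Since `x⁻¹ = x³` for `x = i`, the numerator collapses to `4 (Z(1, x⁻¹) - Z(1, x))`, and
`Z(1, -a) - Z(1, a) = -2i · sinZeta a 1`. At `s = 1` the Mellin transform defining
`completedSinZeta` carries no power of `t`, so `sinZeta a 1 = (π/2) ∫₀^∞ sinKernel a`.
For `a = 1/4` the theta series `sinKernel a t = ∑ 2n sin(πn/2) e^{-πn²t}` only sees odd `n`;
grouping the terms `n = 4j+1` and `n = 4j+3` gives blocks whose integrals
`(2/π)(1/(4j+1) - 1/(4j+3))` are absolutely summable, so termwise integration is legitimate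
and Leibniz's series gives `∫₀^∞ sinKernel (1/4) = (2/π)(π/4) = 1/2`.
-/

open Real Set MeasureTheory Filter Topology

lemma integrableOn_exp_neg_mul_sq_mul_Ioi {c m : ℝ} (hc : 0 < c) (hm : m ≠ 0) :
    IntegrableOn (fun t ↦ rexp (-c * m ^ 2 * t)) (Ioi 0) :=
  integrableOn_exp_mul_Ioi (by rw [neg_mul, neg_lt_zero]; positivity) 0

lemma integral_exp_neg_mul_sq_mul_Ioi {c m : ℝ} (hc : 0 < c) (hm : m ≠ 0) :
    ∫ t in Ioi 0, rexp (-c * m ^ 2 * t) = 1 / (c * m ^ 2) := by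
  rw [integral_exp_mul_Ioi (by rw [neg_mul, neg_lt_zero]; positivity) 0]
  field_simp
  simp

lemma abs_mul_exp_sub_mul_exp_le {c m m' t : ℝ} (hc : 0 < c) (hm : 0 < m) (hmm' : m ≤ m')
    (ht : 0 ≤ t) :
    |m * rexp (-c * m ^ 2 * t) - m' * rexp (-c * m' ^ 2 * t)|
      ≤ m * (rexp (-c * m ^ 2 * t) - rexp (-c * m' ^ 2 * t))
        + (m' - m) * rexp (-c * m' ^ 2 * t) := by
  have hexp : rexp (-c * m' ^ 2 * t) ≤ rexp (-c * m ^ 2 * t) := by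
    rw [exp_le_exp, neg_mul, neg_mul, neg_mul, neg_mul, neg_le_neg_iff]
    gcongr
  rw [abs_le]
  constructor <;> nlinarith [exp_nonneg (-c * m' ^ 2 * t)]

lemma integral_abs_mul_exp_sub_mul_exp_le {c m m' : ℝ} (hc : 0 < c) (hm : 0 < m)
    (hmm' : m ≤ m') :
    ∫ t in Ioi 0, |m * rexp (-c * m ^ 2 * t) - m' * rexp (-c * m' ^ 2 * t)|
      ≤ 3 / c * (1 / m - 1 / m') := by
  have hm' : 0 < m' := hm.trans_le hmm'
  have hi := integrableOn_exp_neg_mul_sq_mul_Ioi hc hm.ne'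
  have hi' := integrableOn_exp_neg_mul_sq_mul_Ioi hc hm'.ne'
  have hdiff : IntegrableOn (fun t ↦ m * (rexp (-c * m ^ 2 * t) - rexp (-c * m' ^ 2 * t)))
      (Ioi 0) := (hi.sub hi').const_mul m
  calc _ ≤ ∫ t in Ioi 0, (m * (rexp (-c * m ^ 2 * t) - rexp (-c * m' ^ 2 * t))
          + (m' - m) * rexp (-c * m' ^ 2 * t)) := by
        refine setIntegral_mono_on ?_ (hdiff.add (hi'.const_mul _)) measurableSet_Ioi
          fun t ht ↦ abs_mul_exp_sub_mul_exp_le hc hm hmm' (le_of_lt ht)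
        exact ((hi.const_mul m).sub (hi'.const_mul m')).abs
    _ = m * (1 / (c * m ^ 2) - 1 / (c * m' ^ 2)) + (m' - m) * (1 / (c * m' ^ 2)) := by
        rw [integral_add hdiff (hi'.const_mul _), integral_const_mul, integral_const_mul,
          integral_sub hi hi', integral_exp_neg_mul_sq_mul_Ioi hc hm.ne',
          integral_exp_neg_mul_sq_mul_Ioi hc hm'.ne']
    _ ≤ 3 / c * (1 / m - 1 / m') := by
        rw [← sub_nonneg]
        have : 3 / c * (1 / m - 1 / m') - (m * (1 / (c * m ^ 2) - 1 / (c * m' ^ 2))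
            + (m' - m) * (1 / (c * m' ^ 2))) = 2 * (m' - m) ^ 2 / (c * m * m' ^ 2) := by
          field_simp
          ring
        rw [this]
        positivity

noncomputable def sinKernelQuarterBlock (j : ℕ) (t : ℝ) : ℝ :=
  2 * ((4 * j + 1) * rexp (-π * (4 * j + 1) ^ 2 * t)
    - (4 * j + 3) * rexp (-π * (4 * j + 3) ^ 2 * t))

lemma sin_two_pi_quarter_mul_nat_mul_four_add (j : ℕ) (r : ℝ) :
    Real.sin (2 * π * (1 / 4) * (j * 4 + r)) = Real.sin (π / 2 * r) := by
  rw [show 2 * π * (1 / 4) * (j * 4 + r) = π / 2 * r + j * (2 * π) by ring,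
    Real.sin_add_nat_mul_two_pi]

lemma hasSum_sinKernelQuarterBlock {t : ℝ} (ht : 0 < t) :
    HasSum (sinKernelQuarterBlock · t) (sinKernel ((1 / 4 : ℝ) : UnitAddCircle) t) := by
  have h := (Nat.divModEquiv 4).symm.hasSum_iff.mpr (hasSum_nat_sinKernel (1 / 4) ht)
  have sin_three_pi_div_two : Real.sin (π / 2 * 3) = -1 := by
    rw [show π / 2 * 3 = π / 2 + π by ring, Real.sin_add_pi, Real.sin_pi_div_two]
  refine h.prod_fiberwise fun j ↦ ?_
  convert hasSum_fintype (β := Fin 4) _ using 1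
  simp only [Function.comp_def, Nat.divModEquiv_symm_apply, Fin.sum_univ_four, Fin.val_zero,
    Fin.val_one, Fin.val_two, show ((3 : Fin 4) : ℕ) = 3 from rfl]
  push_cast
  simp only [sin_two_pi_quarter_mul_nat_mul_four_add, mul_zero, mul_one, Real.sin_zero,
    Real.sin_pi_div_two, div_mul_cancel₀ π two_ne_zero, Real.sin_pi,
    sin_three_pi_div_two, sinKernelQuarterBlock]
  rw [mul_comm (j : ℝ) 4]
  ring

lemma integrableOn_sinKernelQuarterBlock (j : ℕ) :
    IntegrableOn (sinKernelQuarterBlock j) (Ioi 0) :=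
  (((integrableOn_exp_neg_mul_sq_mul_Ioi pi_pos (by positivity)).const_mul _).sub
    ((integrableOn_exp_neg_mul_sq_mul_Ioi pi_pos (by positivity)).const_mul _)).const_mul 2

lemma integral_sinKernelQuarterBlock (j : ℕ) :
    ∫ t in Ioi 0, sinKernelQuarterBlock j t = 2 / π * (1 / (4 * j + 1) - 1 / (4 * j + 3)) := by
  have h1 : (4 * j + 1 : ℝ) ≠ 0 := by positivity
  have h3 : (4 * j + 3 : ℝ) ≠ 0 := by positivity
  simp only [sinKernelQuarterBlock]
  rw [integral_const_mul, integral_sub ((integrableOn_exp_neg_mul_sq_mul_Ioi pi_pos h1).const_mul _)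
    ((integrableOn_exp_neg_mul_sq_mul_Ioi pi_pos h3).const_mul _), integral_const_mul,
    integral_const_mul, integral_exp_neg_mul_sq_mul_Ioi pi_pos h1,
    integral_exp_neg_mul_sq_mul_Ioi pi_pos h3]
  field_simp

lemma integral_norm_sinKernelQuarterBlock_le (j : ℕ) :
    ∫ t in Ioi 0, ‖sinKernelQuarterBlock j t‖
      ≤ 6 / π * (1 / (4 * j + 1) - 1 / (4 * j + 3)) := by
  simp only [sinKernelQuarterBlock, norm_mul, Real.norm_eq_abs, abs_two]
  rw [integral_const_mul]
  calc _ ≤ 2 * (3 / π * (1 / (4 * j + 1) - 1 / (4 * j + 3))) := by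
        gcongr
        exact integral_abs_mul_exp_sub_mul_exp_le pi_pos (by positivity) (by linarith)
    _ = _ := by ring

lemma sum_range_two_mul_neg_one_pow_div (k : ℕ) :
    ∑ i ∈ Finset.range (2 * k), (-1 : ℝ) ^ i / (2 * i + 1)
      = ∑ j ∈ Finset.range k, (1 / (4 * (j : ℝ) + 1) - 1 / (4 * j + 3)) := by
  induction k with
  | zero => simp
  | succ k ih =>
    rw [Finset.sum_range_succ, ← ih, show 2 * (k + 1) = 2 * k + 1 + 1 by ring,
      Finset.sum_range_succ, Finset.sum_range_succ, pow_succ, pow_mul, neg_one_sq, one_pow]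
    push_cast
    ring

lemma hasSum_one_div_four_mul_add_one_sub_one_div_four_mul_add_three :
    HasSum (fun j : ℕ ↦ 1 / (4 * j + 1) - 1 / (4 * j + 3 : ℝ)) (π / 4) := by
  refine (hasSum_iff_tendsto_nat_of_nonneg (fun j ↦ ?_) _).mpr ?_
  · exact sub_nonneg.mpr (one_div_le_one_div_of_le (by positivity) (by linarith))
  · exact (tendsto_sum_pi_div_four.comp (tendsto_id.const_mul_atTop' two_pos)).congr
      sum_range_two_mul_neg_one_pow_div

lemma integral_sinKernel_quarter :
    ∫ t in Ioi 0, sinKernel ((1 / 4 : ℝ) : UnitAddCircle) t = 1 / 2 := by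
  have hsum : Summable fun j ↦ ∫ t in Ioi 0, ‖sinKernelQuarterBlock j t‖ :=
    (hasSum_one_div_four_mul_add_one_sub_one_div_four_mul_add_three.summable.mul_left
      (6 / π)).of_nonneg_of_le (fun j ↦ integral_nonneg fun t ↦ norm_nonneg _)
      integral_norm_sinKernelQuarterBlock_le
  have h := hasSum_integral_of_summable_integral_norm integrableOn_sinKernelQuarterBlock hsum
  rw [setIntegral_congr_fun measurableSet_Ioi
    fun t ht ↦ (hasSum_sinKernelQuarterBlock ht).tsum_eq] at h
  refine h.unique ?_
  simp_rw [integral_sinKernelQuarterBlock]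
  rw [show (1 / 2 : ℝ) = 2 / π * (π / 4) by field_simp; norm_num]
  exact hasSum_one_div_four_mul_add_one_sub_one_div_four_mul_add_three.mul_left (2 / π)

lemma sinZeta_one (a : UnitAddCircle) :
    sinZeta a 1 = π / 2 * ∫ t in Ioi 0, sinKernel a t := by
  have hg : (hurwitzOddFEPair a).g = ((↑) : ℝ → ℂ) ∘ sinKernel a := rfl
  rw [sinZeta, completedSinZeta, (isStrong_hurwitzOddFEPair a).symm_Λ_eq, mellin, hg,
    show ((1 : ℂ) + 1) / 2 = 1 by norm_num, show ((1 : ℂ) + 1) = 2 by norm_num, Gammaℝ_def,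
    show (-2 : ℂ) / 2 = -1 by norm_num, div_self two_ne_zero, cpow_neg_one, Complex.Gamma_one]
  simp only [sub_self, cpow_zero, one_smul, Function.comp_apply, integral_complex_ofReal]
  field_simp

lemma expZeta_neg_sub_expZeta (a : UnitAddCircle) (s : ℂ) :
    expZeta (-a) s - expZeta a s = -2 * I * sinZeta a s := by
  rw [expZeta, expZeta, cosZeta_neg, sinZeta_neg]
  ring

lemma coe_three_quarters : ((3 / 4 : ℝ) : UnitAddCircle) = -((1 / 4 : ℝ) : UnitAddCircle) := by
  rw [show (3 : ℝ) / 4 = -(1 / 4) + 1 by norm_num, AddCircle.coe_add_period,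
    QuotientAddGroup.mk_neg]

/-- The three-variable Witten L-function `ζ^W_{SU(2)}(-2; g, g, g)` for `g ∈ SU(2)` with
eigenvalues `±i` (i.e. `x = i`, `x³ = x⁻¹ = e^{2πi·(3/4)}`, `x⁻³ = x = e^{2πi·(1/4)}`)
equals `π/4`; in particular it is nonzero. -/
theorem witten_SU2_three_variable_nonvanishing :
    (expZeta (((3 : ℝ) / 4 : ℝ) : UnitAddCircle) 1
        - 3 * expZeta (((1 : ℝ) / 4 : ℝ) : UnitAddCircle) 1
        + 3 * expZeta (((3 : ℝ) / 4 : ℝ) : UnitAddCircle) 1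
        - expZeta (((1 : ℝ) / 4 : ℝ) : UnitAddCircle) 1) / (I - I⁻¹) ^ 3
      = 4 * (expZeta (((3 : ℝ) / 4 : ℝ) : UnitAddCircle) 1
          - expZeta (((1 : ℝ) / 4 : ℝ) : UnitAddCircle) 1) / (2 * I) ^ 3 ∧
    4 * (expZeta (((3 : ℝ) / 4 : ℝ) : UnitAddCircle) 1
        - expZeta (((1 : ℝ) / 4 : ℝ) : UnitAddCircle) 1) / (2 * I) ^ 3
      = (Real.pi : ℂ) / 4 ∧
    ((Real.pi : ℂ) / 4 : ℂ) ≠ 0 := by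
  refine ⟨by rw [inv_I]; ring, ?_, by simp [pi_ne_zero]⟩
  rw [coe_three_quarters, expZeta_neg_sub_expZeta, sinZeta_one, integral_sinKernel_quarter]
  have hI3 : (2 * I) ^ 3 = -8 * I := by linear_combination 8 * I * I_sq
  rw [hI3]
  field_simp
  push_cast
  ring
end

section
/- Let p ≥ 3 be an odd prime (regarded as a positive real number). Define, for s ∈ ℂ, Z₀(s) = 1 + 2·((p−1)/2)^{−s} + 2·((p+1)/2)^{−s} + ((p−1)/2)·(p−1)^{−s} + p^{−s} + ((p−3)/2)·(p+1)^{−s} and Z_∞(s) = (1/(1−p^{1−s}))·(4p·((p²−1)/2)^{−s} + ((p²−1)/2)·(p²−p)^{−s} + ((p−1)²/2)·(p²+p)^{−s}). Then Z₀(−2) + Z_∞(−2) = 0, Z₀(−1) + Z_∞(−1) = 0, and Z₀(0) + Z_∞(0) = −4/(p−1). (These are the values ζ^W_{SL₂(ℤ_p)}(−2) = 0, ζ^W_{SL₂(ℤ_p)}(−1) = 0, and ζ^W_{SL₂(ℤ_p)}(0) = −4/(p−1) of the Witten zeta function of SL₂(ℤ_p), via Jaikin-Zapirain's explicit formula ζ^W_{SL₂(ℤ_p)}(s)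 = Z₀(s) + Z_∞(s).) -/
/-!
At `s = -n` with `n : ℕ` every complex power in `Z₀` and `Z_∞` becomes a natural power and
`1 - p ^ (1 - s) = 1 - p ^ (n + 1)`, so each special value is a rational function of `p`.
For `n = 2, 1, 0` these rational functions equal `0, 0, -4 / (p - 1)` identically, wherever
`p ^ (n + 1) ≠ 1`.
-/

open Complex

namespace WittenSL2

/-- `Z₀ (-n)` with `p` replaced by an arbitrary `q`. -/
noncomputable def wittenZ₀ (q : ℂ) (n : ℕ) : ℂ :=
  1 + 2 * ((q - 1) / 2) ^ n + 2 * ((q + 1) / 2) ^ n + (q - 1) / 2 * (q - 1) ^ n + q ^ n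
    + (q - 3) / 2 * (q + 1) ^ n

/-- `Z_∞ (-n)` with `p` replaced by an arbitrary `q`. -/
noncomputable def wittenZInf (q : ℂ) (n : ℕ) : ℂ :=
  1 / (1 - q ^ (n + 1))
    * (4 * q * ((q ^ 2 - 1) / 2) ^ n + (q ^ 2 - 1) / 2 * (q ^ 2 - q) ^ n
      + (q - 1) ^ 2 / 2 * (q ^ 2 + q) ^ n)

lemma wittenZ₀_add_wittenZInf_two {q : ℂ} (hq : q ^ 3 ≠ 1) :
    wittenZ₀ q 2 + wittenZInf q 2 = 0 := by
  have : 1 - q ^ 3 ≠ 0 := sub_ne_zero.2 hq.symm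
  norm_num [wittenZ₀, wittenZInf]
  field_simp
  ring

lemma wittenZ₀_add_wittenZInf_one {q : ℂ} (hq : q ^ 2 ≠ 1) :
    wittenZ₀ q 1 + wittenZInf q 1 = 0 := by
  have : 1 - q ^ 2 ≠ 0 := sub_ne_zero.2 hq.symm
  norm_num [wittenZ₀, wittenZInf]
  field_simp
  ring

lemma wittenZ₀_add_wittenZInf_zero {q : ℂ} (hq : q ≠ 1) :
    wittenZ₀ q 0 + wittenZInf q 0 = -4 / (q - 1) := by
  have : 1 - q ≠ 0 := sub_ne_zero.2 hq.symm
  have : q - 1 ≠ 0 := sub_ne_zero.2 hq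
  norm_num [wittenZ₀, wittenZInf]
  field_simp
  ring

lemma eq_wittenZ₀_neg_natCast {q : ℂ} {Z₀ : ℂ → ℂ}
    (hZ₀ : ∀ s : ℂ, Z₀ s =
      1 + 2 * (((q - 1) / 2) ^ (-s)) + 2 * (((q + 1) / 2) ^ (-s))
        + ((q - 1) / 2) * ((q - 1) ^ (-s)) + q ^ (-s)
        + ((q - 3) / 2) * ((q + 1) ^ (-s)))
    (n : ℕ) : Z₀ (-n) = wittenZ₀ q n := by
  simp only [hZ₀, neg_neg, cpow_natCast, wittenZ₀]

lemma eq_wittenZInf_neg_natCast {q : ℂ} {Zinf : ℂ → ℂ}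
    (hZinf : ∀ s : ℂ, Zinf s =
      (1 / (1 - q ^ (1 - s)))
        * (4 * q * (((q ^ 2 - 1) / 2) ^ (-s))
            + ((q ^ 2 - 1) / 2) * ((q ^ 2 - q) ^ (-s))
            + (((q - 1) ^ 2) / 2) * ((q ^ 2 + q) ^ (-s))))
    (n : ℕ) : Zinf (-n) = wittenZInf q n := by
  have hexp : (1 : ℂ) - -(n : ℂ) = ((n + 1 : ℕ) : ℂ) := by push_cast; ring
  simp only [hZinf, hexp, neg_neg, cpow_natCast, wittenZInf]

lemma natCast_pow_ne_one {p k : ℕ} (hp : 1 < p) (hk : k ≠ 0) : (p : ℂ) ^ k ≠ 1 := by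
  exact_mod_cast (Nat.one_lt_pow hk hp).ne'

end WittenSL2

open WittenSL2 in
theorem witten_SL2_Zp_special_values_general (p : ℕ) (hp : p.Prime)
    (Z₀ Zinf : ℂ → ℂ)
    (hZ₀ : ∀ s : ℂ, Z₀ s =
      1 + 2 * ((((p : ℂ) - 1) / 2) ^ (-s)) + 2 * ((((p : ℂ) + 1) / 2) ^ (-s))
        + (((p : ℂ) - 1) / 2) * (((p : ℂ) - 1) ^ (-s)) + (p : ℂ) ^ (-s)
        + (((p : ℂ) - 3) / 2) * (((p : ℂ) + 1) ^ (-s)))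
    (hZinf : ∀ s : ℂ, Zinf s =
      (1 / (1 - (p : ℂ) ^ (1 - s)))
        * (4 * (p : ℂ) * ((((p : ℂ) ^ 2 - 1) / 2) ^ (-s))
            + (((p : ℂ) ^ 2 - 1) / 2) * (((p : ℂ) ^ 2 - (p : ℂ)) ^ (-s))
            + ((((p : ℂ) - 1) ^ 2) / 2) * (((p : ℂ) ^ 2 + (p : ℂ)) ^ (-s)))) :
    Z₀ (-2) + Zinf (-2) = 0 ∧ Z₀ (-1) + Zinf (-1) = 0 ∧
      Z₀ 0 + Zinf 0 = -4 / ((p : ℂ) - 1) := by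
  have hsum (n : ℕ) : Z₀ (-n) + Zinf (-n) = wittenZ₀ p n + wittenZInf p n := by
    rw [eq_wittenZ₀_neg_natCast hZ₀, eq_wittenZInf_neg_natCast hZinf]
  have hp₁ : (p : ℂ) ≠ 1 := by exact_mod_cast hp.one_lt.ne'
  refine ⟨?_, ?_, ?_⟩
  · simpa using (hsum 2).trans
      (wittenZ₀_add_wittenZInf_two (natCast_pow_ne_one hp.one_lt three_ne_zero))
  · simpa using (hsum 1).trans
      (wittenZ₀_add_wittenZInf_one (natCast_pow_ne_one hp.one_lt two_ne_zero))
  · simpa using (hsum 0).trans (wittenZ₀_add_wittenZInf_zero hp₁)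

/-- Special values of the Witten zeta function of `SL₂(ℤ_p)` for an odd prime `p`, via
Jaikin-Zapirain's explicit formula `ζ^W_{SL₂(ℤ_p)}(s) = Z₀(s) + Z_∞(s)`:
`ζ^W_{SL₂(ℤ_p)}(-2) = 0`, `ζ^W_{SL₂(ℤ_p)}(-1) = 0`, `ζ^W_{SL₂(ℤ_p)}(0) = -4/(p-1)`. -/
theorem witten_SL2_Zp_special_values (p : ℕ) (hp : p.Prime) (hodd : Odd p)
    (Z₀ Zinf : ℂ → ℂ)
    (hZ₀ : ∀ s : ℂ, Z₀ s =
      1 + 2 * ((((p : ℂ) - 1) / 2) ^ (-s)) + 2 * ((((p : ℂ) + 1) / 2) ^ (-s))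
        + (((p : ℂ) - 1) / 2) * (((p : ℂ) - 1) ^ (-s)) + (p : ℂ) ^ (-s)
        + (((p : ℂ) - 3) / 2) * (((p : ℂ) + 1) ^ (-s)))
    (hZinf : ∀ s : ℂ, Zinf s =
      (1 / (1 - (p : ℂ) ^ (1 - s)))
        * (4 * (p : ℂ) * ((((p : ℂ) ^ 2 - 1) / 2) ^ (-s))
            + (((p : ℂ) ^ 2 - 1) / 2) * (((p : ℂ) ^ 2 - (p : ℂ)) ^ (-s))
            + ((((p : ℂ) - 1) ^ 2) / 2) * (((p : ℂ) ^ 2 + (p : ℂ)) ^ (-s)))) :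
    Z₀ (-2) + Zinf (-2) = 0 ∧ Z₀ (-1) + Zinf (-1) = 0 ∧
      Z₀ 0 + Zinf 0 = -4 / ((p : ℂ) - 1) :=
  witten_SL2_Zp_special_values_general p hp Z₀ Zinf hZ₀ hZinf
end

section
/- Let u(X) = X³ + X² − X − 1 − X^{−1}. Then for every real p > 0 with p ≠ 1 and every s ∈ ℂ, 1 + u(p)·p^{−3−2s} + u(p^{−1})·p^{−2−3s} + p^{−5−5s} = (1 − p^{−2−s})·(1 − p^{−1−s})·(1 + (p^{−1} + p^{−2})·p^{−s} + (1 + p^{−1})·p^{−2s} + p^{−2−3s}). (This is the factorization of the numerator of the explicit formula for the Witten zeta function of the congruence subgroup SL₃(ℤ_p)[p^m].) -/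
/-!
With `q = p⁻¹` and `t = p^{-s}` every power `p^{-m-ns}` in the identity becomes the monomial
`q^m t^n`, and `u(p) = u(q⁻¹)`, so the claim is an identity of Laurent polynomials in `q` and `t`.
-/

open Complex

/-- The Laurent polynomial `u(X) = X³ + X² - X - 1 - X⁻¹` appearing in the explicit
formula for the Witten zeta function of `SL₃(ℤ_p)[p^m]`. -/
noncomputable def u (X : ℂ) : ℂ := X ^ 3 + X ^ 2 - X - 1 - X⁻¹

theorem Complex.cpow_neg_natCast_sub_natCast_mul {x : ℂ} (hx : x ≠ 0) (m n : ℕ) (s : ℂ) :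
    x ^ (-(m : ℂ) - n * s) = x⁻¹ ^ m * (x ^ (-s)) ^ n := by
  rw [sub_eq_add_neg, ← mul_neg, cpow_add _ _ hx, cpow_neg, cpow_natCast, cpow_nat_mul, inv_pow]

theorem u_inv_numerator_factorization {q : ℂ} (hq : q ≠ 0) (t : ℂ) :
    1 + u q⁻¹ * (q ^ 3 * t ^ 2) + u q * (q ^ 2 * t ^ 3) + q ^ 5 * t ^ 5
      = (1 - q ^ 2 * t) * (1 - q * t)
        * (1 + (q + q ^ 2) * t + (1 + q) * t ^ 2 + q ^ 2 * t ^ 3) := by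
  unfold u
  field_simp
  ring

theorem witten_SL3_numerator_factorization_general (p : ℝ) (hp : 0 < p) (s : ℂ) :
    1 + u (p : ℂ) * (p : ℂ) ^ (-3 - 2 * s) + u ((p : ℂ)⁻¹) * (p : ℂ) ^ (-2 - 3 * s)
        + (p : ℂ) ^ (-5 - 5 * s)
      = (1 - (p : ℂ) ^ (-2 - s)) * (1 - (p : ℂ) ^ (-1 - s))
        * (1 + ((p : ℂ)⁻¹ + ((p : ℂ)⁻¹) ^ 2) * (p : ℂ) ^ (-s)
            + (1 + (p : ℂ)⁻¹) * (p : ℂ) ^ (-2 * s) + (p : ℂ) ^ (-2 - 3 * s)) := by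
  have hp0 : (p : ℂ) ≠ 0 := by exact_mod_cast hp.ne'
  have monomial (m n : ℕ) (z : ℂ) (hzs : z = -(m : ℂ) - n * s) :
      (p : ℂ) ^ z = (p : ℂ)⁻¹ ^ m * ((p : ℂ) ^ (-s)) ^ n := by
    rw [hzs, cpow_neg_natCast_sub_natCast_mul hp0]
  have key := u_inv_numerator_factorization (inv_ne_zero hp0) ((p : ℂ) ^ (-s))
  rw [inv_inv] at key
  rw [monomial 3 2 (-3 - 2 * s) (by push_cast; ring), monomial 2 3 (-2 - 3 * s) (by push_cast; ring),
    monomial 5 5 (-5 - 5 * s) (by push_cast; ring), monomial 2 1 (-2 - s) (by push_cast; ring),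
    monomial 1 1 (-1 - s) (by push_cast; ring), monomial 0 2 (-2 * s) (by push_cast; ring)]
  linear_combination key

/-- Factorization of the numerator of the explicit formula for the Witten zeta function
of the congruence subgroup `SL₃(ℤ_p)[p^m]`. -/
theorem witten_SL3_numerator_factorization (p : ℝ) (hp : 0 < p) (hp1 : p ≠ 1) (s : ℂ) :
    1 + u (p : ℂ) * (p : ℂ) ^ (-3 - 2 * s) + u ((p : ℂ)⁻¹) * (p : ℂ) ^ (-2 - 3 * s)
        + (p : ℂ) ^ (-5 - 5 * s)
      = (1 - (p : ℂ) ^ (-2 - s)) * (1 - (p : ℂ) ^ (-1 - s))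
        * (1 + ((p : ℂ)⁻¹ + ((p : ℂ)⁻¹) ^ 2) * (p : ℂ) ^ (-s)
            + (1 + (p : ℂ)⁻¹) * (p : ℂ) ^ (-2 * s) + (p : ℂ) ^ (-2 - 3 * s)) :=
  witten_SL3_numerator_factorization_general p hp s
end

section
/- Let u(X) = X³ + X² − X − 1 − X^{−1}, let m be a positive integer, and let s ∈ ℂ with s ≠ 1/2 and s ≠ 2/3. Then, as the real variable p tends to 1 from the right, p^{8m}·(1 + u(p)·p^{−3−2s} + u(p^{−1})·p^{−2−3s} + p^{−5−5s})/((1 − p^{1−2s})·(1 − p^{2−3s})) tends to (s+1)(s+2)/((s − 1/2)(s − 2/3)). (This is the 'absolute limit' ζ^W_{SL₃(ℤ₁)[1^m]}(s) = (s+1)(s+2)/((s−1/2)(s−2/3)) of the Witten zeta function of the congruence subgroup SL₃(ℤ_p)[p^m].) -/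
/-!
Write `z = p^{-s}`. The numerator factors as `p^{-5} (z - p²) (z - p) R(p, z)` with
`R = wittenCofactor` and `R(1, 1) = 6`, so the expression is a product of two quotients
`(p^a - p^b) / (p^c - p^d)`, each of the form `0/0` at `p = 1` and hence tending to the ratio
of derivatives `(a - b) / (c - d)`, and of a factor tending to `6`. This gives
`(s + 2)/(1 - 2s) · (s + 1)/(2 - 3s) · 6`.
-/

open Complex Filter

open Topology

theorem tendsto_div_nhdsNE_of_hasDerivAt {𝕜 F : Type*} [NontriviallyNormedField 𝕜]
    [NormedField F] [NormedAlgebra 𝕜 F] {f g : 𝕜 → F} {f' g' : F} {a : 𝕜}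
    (hf : HasDerivAt f f' a) (hg : HasDerivAt g g' a) (hfa : f a = 0) (hga : g a = 0)
    (hg' : g' ≠ 0) : Tendsto (fun x ↦ f x / g x) (𝓝[≠] a) (𝓝 (f' / g')) := by
  refine ((hasDerivAt_iff_tendsto_slope.mp hf).div (hasDerivAt_iff_tendsto_slope.mp hg)
    hg').congr' ?_
  filter_upwards [self_mem_nhdsWithin] with x hx
  have hxa : algebraMap 𝕜 F (x - a)⁻¹ ≠ 0 := by simpa [sub_eq_zero] using hx
  simp only [Pi.div_apply, slope_def_module, hfa, hga, sub_zero, Algebra.smul_def]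
  exact mul_div_mul_left _ _ hxa

theorem hasDerivAt_ofReal_cpow_const_one (c : ℂ) :
    HasDerivAt (fun x : ℝ ↦ (x : ℂ) ^ c) c 1 := by
  simpa using (hasStrictDerivAt_cpow_const (c := c) one_mem_slitPlane).hasDerivAt.comp_ofReal

theorem tendsto_ofReal_cpow_sub_cpow_div_cpow_sub_cpow (a b c d : ℂ) (hcd : c ≠ d) :
    Tendsto (fun x : ℝ ↦ ((x : ℂ) ^ a - (x : ℂ) ^ b) / ((x : ℂ) ^ c - (x : ℂ) ^ d))
      (𝓝[≠] 1) (𝓝 ((a - b) / (c - d))) :=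
  tendsto_div_nhdsNE_of_hasDerivAt
    ((hasDerivAt_ofReal_cpow_const_one a).sub (hasDerivAt_ofReal_cpow_const_one b))
    ((hasDerivAt_ofReal_cpow_const_one c).sub (hasDerivAt_ofReal_cpow_const_one d))
    (by simp) (by simp) (sub_ne_zero.mpr hcd)

noncomputable def wittenCofactor (w z : ℂ) : ℂ :=
  z ^ 3 + (w ^ 2 + w) * z ^ 2 + (1 + w) * z + w ^ 2

theorem one_add_u_mul_add_u_inv_mul_add_eq (w z : ℂ) (hw : w ≠ 0) :
    1 + u w * (z ^ 2 / w ^ 3) + u w⁻¹ * (z ^ 3 / w ^ 2) + z ^ 5 / w ^ 5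
      = (z - w ^ 2) * (z - w) * wittenCofactor w z / w ^ 5 := by
  unfold u wittenCofactor
  field_simp
  ring

theorem witten_formula_eq_mul_mul (x s : ℂ) (m : ℕ) (hx : x ≠ 0) :
    x ^ (8 * m) * (1 + u x * x ^ (-3 - 2 * s) + u x⁻¹ * x ^ (-2 - 3 * s) + x ^ (-5 - 5 * s))
        / ((1 - x ^ (1 - 2 * s)) * (1 - x ^ (2 - 3 * s)))
      = (x ^ (-s) - x ^ (2 : ℂ)) / (x ^ (0 : ℂ) - x ^ (1 - 2 * s))
        * ((x ^ (-s) - x ^ (1 : ℂ)) / (x ^ (0 : ℂ) - x ^ (2 - 3 * s)))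
        * (x ^ (8 * m) * wittenCofactor x (x ^ (-s)) / x ^ 5) := by
  have hpow : ∀ (n k : ℕ) [n.AtLeastTwo] [k.AtLeastTwo],
      x ^ (-(OfNat.ofNat n : ℂ) - OfNat.ofNat k * s)
        = (x ^ (-s)) ^ (OfNat.ofNat k : ℕ) / x ^ (OfNat.ofNat n : ℕ) := by
    intro n k _ _
    rw [show -(OfNat.ofNat n : ℂ) - OfNat.ofNat k * s = OfNat.ofNat k * (-s) - OfNat.ofNat n by
      ring, cpow_sub _ _ hx, cpow_ofNat_mul, cpow_ofNat]
  rw [hpow 3 2, hpow 2 3, hpow 5 5, one_add_u_mul_add_u_inv_mul_add_eq _ _ hx]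
  simp only [cpow_zero, cpow_one, cpow_ofNat]
  -- as atoms, so that `ring` inverts the product `C * D` factorwise instead of expanding it first
  generalize 1 - x ^ (1 - 2 * s) = C
  generalize 1 - x ^ (2 - 3 * s) = D
  ring

theorem tendsto_wittenCofactor_mul_div (s : ℂ) (m : ℕ) :
    Tendsto (fun p : ℝ ↦ (p : ℂ) ^ (8 * m) * wittenCofactor p ((p : ℂ) ^ (-s)) / (p : ℂ) ^ 5)
      (𝓝 1) (𝓝 6) := by
  have hz : ContinuousAt (fun p : ℝ ↦ (p : ℂ) ^ (-s)) 1 :=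
    (hasDerivAt_ofReal_cpow_const_one _).continuousAt
  have hcont : ContinuousAt
      (fun p : ℝ ↦ (p : ℂ) ^ (8 * m) * wittenCofactor p ((p : ℂ) ^ (-s)) / (p : ℂ) ^ 5) 1 := by
    unfold wittenCofactor
    fun_prop (disch := simp)
  convert hcont.tendsto using 2
  norm_num [wittenCofactor]

theorem witten_SL3_congruence_absolute_limit_general (m : ℕ) (s : ℂ)
    (hs1 : s ≠ 1 / 2) (hs2 : s ≠ 2 / 3) :
    Tendsto
      (fun p : ℝ ↦ (p : ℂ) ^ (8 * m)
        * (1 + u (p : ℂ) * (p : ℂ) ^ (-3 - 2 * s) + u ((p : ℂ)⁻¹) * (p : ℂ) ^ (-2 - 3 * s)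
            + (p : ℂ) ^ (-5 - 5 * s))
        / ((1 - (p : ℂ) ^ (1 - 2 * s)) * (1 - (p : ℂ) ^ (2 - 3 * s))))
      (nhdsWithin 1 (Set.Ioi 1))
      (nhds ((s + 1) * (s + 2) / ((s - 1 / 2) * (s - 2 / 3)))) := by
  have h1 : 1 - 2 * s ≠ 0 := fun h ↦ hs1 (by linear_combination -h / 2)
  have h2 : 2 - 3 * s ≠ 0 := fun h ↦ hs2 (by linear_combination -h / 3)
  have hlim := (((tendsto_ofReal_cpow_sub_cpow_div_cpow_sub_cpow (-s) 2 0 _ h1.symm).mul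
      (tendsto_ofReal_cpow_sub_cpow_div_cpow_sub_cpow (-s) 1 0 _ h2.symm)).mono_left
      (nhdsGT_le_nhdsNE 1)).mul ((tendsto_wittenCofactor_mul_div s m).mono_left nhdsWithin_le_nhds)
  convert hlim.congr' ?_ using 2
  · field_simp
    ring
  · filter_upwards [self_mem_nhdsWithin] with p (hp : 1 < p)
    exact (witten_formula_eq_mul_mul _ s m (ofReal_ne_zero.mpr (by linarith))).symm

/-- The "absolute limit" of the Witten zeta function of the congruence subgroup
`SL₃(ℤ_p)[p^m]`: as the real variable `p → 1⁺`, the explicit formula tends to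
`(s+1)(s+2)/((s-1/2)(s-2/3))` for `s ≠ 1/2, 2/3`. -/
theorem witten_SL3_congruence_absolute_limit (m : ℕ) (hm : 0 < m) (s : ℂ)
    (hs1 : s ≠ 1 / 2) (hs2 : s ≠ 2 / 3) :
    Tendsto
      (fun p : ℝ ↦ (p : ℂ) ^ (8 * m)
        * (1 + u (p : ℂ) * (p : ℂ) ^ (-3 - 2 * s) + u ((p : ℂ)⁻¹) * (p : ℂ) ^ (-2 - 3 * s)
            + (p : ℂ) ^ (-5 - 5 * s))
        / ((1 - (p : ℂ) ^ (1 - 2 * s)) * (1 - (p : ℂ) ^ (2 - 3 * s))))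
      (nhdsWithin 1 (Set.Ioi 1))
      (nhds ((s + 1) * (s + 2) / ((s - 1 / 2) * (s - 2 / 3)))) :=
  witten_SL3_congruence_absolute_limit_general m s hs1 hs2
end
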